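/- Let P be a consistent disjunctive extended logic program (a DLPOD in which every rule head is a single disjunction of literals, i.e. n=1, all of whose standard disjunctive answer sets are consistent). Then the answer sets of P in the three-valued DLPOD sense coincide with the standard answer sets of P: M is a three-valued DLPOD answer set of P iff M takes values only in {F,T} and {L : M(L)=T} is a standard disjunctive answer set of P. -/

import Mathlib

/-! Four truth values F < F* < T* < T. -/
inductive V4 : Type
  | F | Fs | Ts | T
  deriving DecidableEq, Repr

instance instFintypeV4 : Fintype V4 :=
  ⟨{V4.F, V4.Fs, V4.Ts, V4.T}, fun x => by cases x <;> simp⟩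

namespace V4

def toNat : V4 → ℕ
  | F => 0
  | Fs => 1
  | Ts => 2
  | T => 3

theorem toNat_injective : Function.Injective toNat := by
  intro a b h
  cases a <;> cases b <;> simp_all [toNat]

instance : LinearOrder V4 := LinearOrder.lift' toNat toNat_injective

instance : BoundedOrder V4 where
  top := T
  le_top a := by cases a <;> decide
  bot := F
  bot_le a := by cases a <;> decide

/-- Negation-as-failure: `not φ` is `T` if `φ ≤ F*`, else `F`. -/
def notv (a : V4) : V4 := if a ≤ Fs then T else F

/-- Ordered disjunction on truth values: `u × v = v` if `u = F*`, else `u`. -/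
def times (a b : V4) : V4 := if a = Fs then b else a

end V4

variable {α : Type}

/-- A ground literal: an atom together with a polarity (`true` = the atom itself,
`false` = its strong negation). -/
structure Lit (α : Type) where
  atom : α
  positive : Bool
  deriving DecidableEq

/-- A (four-valued) interpretation assigns a truth value to every literal.
Three-valued interpretations are the `solid` ones (no `T*` value). -/
abbrev Interp (α : Type) := Lit α → V4

/-- `I` is solid (equivalently, three-valued) if it assigns `T*` to no literal. -/
def solid (I : Interp α) : Prop := ∀ l, I l ≠ V4.Ts

/-- `I` is consistent: no atom has both the atom and its strong negation `T`. -/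
def consistentI (I : Interp α) : Prop :=
  ∀ a : α, ¬ (I ⟨a, true⟩ = V4.T ∧ I ⟨a, false⟩ = V4.T)

/-- `I` takes values only in `{F, T}`. -/
def twoValued (I : Interp α) : Prop := ∀ l, I l = V4.F ∨ I l = V4.T

/-- Value of the conjunction of a list of literals. -/
def evalConj (I : Interp α) (L : List (Lit α)) : V4 := (L.map I).foldr min V4.T

/-- Value of the conjunction `not B1 ∧ ⋯ ∧ not Bk`. -/
def evalNegs (I : Interp α) (L : List (Lit α)) : V4 :=
  (L.map (fun b => V4.notv (I b))).foldr min V4.T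

/-- Value of the disjunction of a list of literals. -/
def evalDisj (I : Interp α) (L : List (Lit α)) : V4 := (L.map I).foldr max V4.F

/-- Value of an ordered disjunction of the given (nonempty) list of values.
(`F*` is a right identity for `×`, so the fold computes `v1 × ⋯ × vn`.) -/
def evalOD (vs : List V4) : V4 := vs.foldr V4.times V4.Fs

/-- Pointwise `≤` on interpretations. -/
def interpLE (I J : Interp α) : Prop := ∀ l, I l ≤ J l

/-- The four-valued relation `⪯`: `u ⪯ v` iff `u = v` or `u ≺ v`, where
`F ≺ F*`, `F ≺ T*`, `F ≺ T` and `T* ≺ T`.  On three-valued (solid)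
interpretations it restricts to the ordering generated by `F ≺ F*`, `F ≺ T`. -/
def preceq (u v : V4) : Prop :=
  u = v ∨ (u = V4.F ∧ v ≠ V4.F) ∨ (u = V4.Ts ∧ v = V4.T)

/-- Pointwise `⪯` on interpretations. -/
def interpPreceq (I J : Interp α) : Prop := ∀ l, preceq (I l) (J l)

/-- The set of literals that are `T` in `I`. -/
def collapse (I : Interp α) : Set (Lit α) := { l | I l = V4.T }

/-! ### LPOD rules -/

/-- An LPOD rule `C1 × ⋯ × Cn ← A1,…,Am, not B1,…,not Bk` with head
`c1 :: cs` (so the head is nonempty). -/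
structure Rule (α : Type) where
  c1 : Lit α
  cs : List (Lit α)
  pos : List (Lit α)
  neg : List (Lit α)

def Rule.headList (R : Rule α) : List (Lit α) := R.c1 :: R.cs

def Rule.headVal (R : Rule α) (I : Interp α) : V4 := evalOD (R.headList.map I)

def Rule.bodyVal (R : Rule α) (I : Interp α) : V4 :=
  min (evalConj I R.pos) (evalNegs I R.neg)

/-- `I` satisfies the rule `R` (the rule evaluates to `T`). -/
def ruleSat (I : Interp α) (R : Rule α) : Prop := R.bodyVal I ≤ R.headVal I

/-- `I` is a model of the LPOD `P`. -/
def isModel (I : Interp α) (P : Set (Rule α)) : Prop := ∀ R ∈ P, ruleSat I R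

/-! ### The ×-reduct of an LPOD -/

/-- A reduct rule `C ← [F*,] A1,…,Am`; `fstar` records whether the constant `F*`
occurs in the body. -/
structure RedRule (α : Type) where
  head : Lit α
  pos : List (Lit α)
  fstar : Bool

def RedRule.bodyVal (r : RedRule α) (I : Interp α) : V4 :=
  min (if r.fstar then V4.Fs else V4.T) (evalConj I r.pos)

def redSat (I : Interp α) (r : RedRule α) : Prop := r.bodyVal I ≤ I r.head

def redModel (I : Interp α) (Q : Set (RedRule α)) : Prop := ∀ r ∈ Q, redSat I r

/-- Reduct rules generated by a head `C1,…,Cn`: rules `Cj ← F*, body` for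
`j < r` and `Cr ← body`, where `r` is the least index with
`I C1 = ⋯ = I C_{r-1} = F*` and (`r = n` or `I Cr ≠ F*`). -/
def xredHead (I : Interp α) (body : List (Lit α)) : List (Lit α) → List (RedRule α)
  | [] => []
  | [c] => [⟨c, body, false⟩]
  | c :: c' :: rest =>
    if I c = V4.Fs then ⟨c, body, true⟩ :: xredHead I body (c' :: rest)
    else [⟨c, body, false⟩]

/-- The ×-reduct of a rule w.r.t. `I`. -/
def xredRule (I : Interp α) (R : Rule α) : List (RedRule α) :=
  if ∃ b ∈ R.neg, I b = V4.T then [] else xredHead I R.pos R.headList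

/-- The ×-reduct of an LPOD w.r.t. `I`. -/
def xreduct (I : Interp α) (P : Set (Rule α)) : Set (RedRule α) :=
  { r | ∃ R ∈ P, r ∈ xredRule I R }

/-- `M` is a three-valued answer set of the LPOD `P`: a consistent three-valued
interpretation that is the `≤`-least (three-valued) model of `P^M_×`. -/
def threeAnswerSet (P : Set (Rule α)) (M : Interp α) : Prop :=
  solid M ∧ consistentI M ∧ redModel M (xreduct M P) ∧
  ∀ N : Interp α, solid N → redModel N (xreduct M P) → interpLE M N

/-! ### Two-valued notions: Brewka answer sets and GL answer sets -/

/-- A set of literals is consistent if it contains no complementary pair. -/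
def twoConsistent (N : Set (Lit α)) : Prop :=
  ∀ a : α, ¬ (Lit.mk a true ∈ N ∧ Lit.mk a false ∈ N)

/-- `N` is a (two-valued) Brewka-model of the LPOD `P`. -/
def brewkaModel (N : Set (Lit α)) (P : Set (Rule α)) : Prop :=
  ∀ R ∈ P, (∀ a ∈ R.pos, a ∈ N) → (∀ b ∈ R.neg, b ∉ N) → ∃ c ∈ R.headList, c ∈ N

/-- A positive rule `C ← A1,…,Am`. -/
structure PosRule (α : Type) where
  head : Lit α
  pos : List (Lit α)

/-- `N` is a two-valued model of a positive program. -/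
def posModel (N : Set (Lit α)) (Q : Set (PosRule α)) : Prop :=
  ∀ r ∈ Q, (∀ a ∈ r.pos, a ∈ N) → r.head ∈ N

/-- The Brewka ×-reduct of an LPOD w.r.t. a set of literals `N`:
`Ci ← A1,…,Am` whenever `Ci ∈ N` and `N ∩ {C1,…,C_{i-1},B1,…,Bk} = ∅`. -/
def brewkaReduct (N : Set (Lit α)) (P : Set (Rule α)) : Set (PosRule α) :=
  { r | ∃ R ∈ P, ∃ l1 l2 : List (Lit α),
      R.headList = l1 ++ r.head :: l2 ∧ r.pos = R.pos ∧ r.head ∈ N ∧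
      (∀ c ∈ l1, c ∉ N) ∧ (∀ b ∈ R.neg, b ∉ N) }

/-- `N` is a Brewka answer set of the LPOD `P`. -/
def brewkaAnswerSet (P : Set (Rule α)) (N : Set (Lit α)) : Prop :=
  twoConsistent N ∧ brewkaModel N P ∧ posModel N (brewkaReduct N P) ∧
  ∀ N', posModel N' (brewkaReduct N P) → N ⊆ N'

/-- The Gelfond–Lifschitz reduct of an extended logic program (an LPOD all
of whose rule heads are single literals) w.r.t. a set of literals `N`. -/
def glReduct (P : Set (Rule α)) (N : Set (Lit α)) : Set (PosRule α) :=
  { r | ∃ R ∈ P, (∀ b ∈ R.neg, b ∉ N) ∧ r.head = R.c1 ∧ r.pos = R.pos }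

/-- `N` is a standard answer set of the extended logic program `P`: a consistent
set of literals that is the least model of `P^N`. -/
def stdAnswerSet (P : Set (Rule α)) (N : Set (Lit α)) : Prop :=
  twoConsistent N ∧ posModel N (glReduct P N) ∧
  ∀ N', posModel N' (glReduct P N) → N ⊆ N'

/-! ### DLPODs -/

/-- A DLPOD rule `𝒞1 × ⋯ × 𝒞n ← A1,…,Am, not B1,…,not Bk`, where each `𝒞i`
is a disjunction of literals; the head is `c1 :: cs` (nonempty). -/
structure DRule (α : Type) where
  c1 : List (Lit α)
  cs : List (List (Lit α))
  pos : List (Lit α)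
  neg : List (Lit α)

def DRule.headList (R : DRule α) : List (List (Lit α)) := R.c1 :: R.cs

def DRule.headVal (R : DRule α) (I : Interp α) : V4 :=
  evalOD (R.headList.map (evalDisj I))

def DRule.bodyVal (R : DRule α) (I : Interp α) : V4 :=
  min (evalConj I R.pos) (evalNegs I R.neg)

def dRuleSat (I : Interp α) (R : DRule α) : Prop := R.bodyVal I ≤ R.headVal I

def isDModel (I : Interp α) (P : Set (DRule α)) : Prop := ∀ R ∈ P, dRuleSat I R

/-- A disjunctive reduct rule `𝒞 ← [F*,] A1,…,Am`. -/
structure DRedRule (α : Type) where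
  head : List (Lit α)
  pos : List (Lit α)
  fstar : Bool

def DRedRule.bodyVal (r : DRedRule α) (I : Interp α) : V4 :=
  min (if r.fstar then V4.Fs else V4.T) (evalConj I r.pos)

def dredSat (I : Interp α) (r : DRedRule α) : Prop := r.bodyVal I ≤ evalDisj I r.head

def dredModel (I : Interp α) (Q : Set (DRedRule α)) : Prop := ∀ r ∈ Q, dredSat I r

def dxredHead (I : Interp α) (body : List (Lit α)) :
    List (List (Lit α)) → List (DRedRule α)
  | [] => []
  | [c] => [⟨c, body, false⟩]
  | c :: c' :: rest =>
    if evalDisj I c = V4.Fs then ⟨c, body, true⟩ :: dxredHead I body (c' :: rest)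
    else [⟨c, body, false⟩]

/-- The ×-reduct of a DLPOD rule w.r.t. `I`. -/
def dxredRule (I : Interp α) (R : DRule α) : List (DRedRule α) :=
  if ∃ b ∈ R.neg, I b = V4.T then [] else dxredHead I R.pos R.headList

/-- The ×-reduct of a DLPOD w.r.t. `I`. -/
def dxreduct (I : Interp α) (P : Set (DRule α)) : Set (DRedRule α) :=
  { r | ∃ R ∈ P, r ∈ dxredRule I R }

/-- `M` is an answer set of the DLPOD `P`: a consistent three-valued
interpretation that is a `≤`-minimal (three-valued) model of `P^M_×`. -/
def dAnswerSet (P : Set (DRule α)) (M : Interp α) : Prop :=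
  solid M ∧ consistentI M ∧ dredModel M (dxreduct M P) ∧
  ∀ N : Interp α, solid N → dredModel N (dxreduct M P) → interpLE N M → N = M

/-- A positive disjunctive rule `C1 ∨ ⋯ ∨ Cq ← A1,…,Am`. -/
structure DPosRule (α : Type) where
  head : List (Lit α)
  pos : List (Lit α)

/-- `N` is a two-valued model of a positive disjunctive program. -/
def dposModel (N : Set (Lit α)) (Q : Set (DPosRule α)) : Prop :=
  ∀ r ∈ Q, (∀ a ∈ r.pos, a ∈ N) → ∃ c ∈ r.head, c ∈ N

/-- The Gelfond–Lifschitz reduct of a disjunctive extended logic program (a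
DLPOD all of whose rule heads are single disjunctions). -/
def glDReduct (P : Set (DRule α)) (N : Set (Lit α)) : Set (DPosRule α) :=
  { r | ∃ R ∈ P, (∀ b ∈ R.neg, b ∉ N) ∧ r.head = R.c1 ∧ r.pos = R.pos }

/-- `N` is a standard disjunctive answer set: a consistent set of literals that
is a minimal two-valued model of `P^N`. -/
def stdDAnswerSet (P : Set (DRule α)) (N : Set (Lit α)) : Prop :=
  twoConsistent N ∧ dposModel N (glDReduct P N) ∧
  ∀ N', dposModel N' (glDReduct P N) → N' ⊆ N → N' = N


/-! Since every head is a single disjunction, the ×-reduct `P^M_×` contains no rule with `F*` in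
its body: it is the Gelfond–Lifschitz reduct `P^N` for `N = {L : M(L) = T}`, read three-valuedly.
The literals true in a model of such a program form a model of `P^N`, and conversely a two-valued
interpretation is a model as soon as its true literals are. Lowering every `F*` of a model to `F`
therefore gives a smaller model, so a minimal model is two-valued, and on two-valued
interpretations `≤` is inclusion of the sets of true literals. -/

namespace V4

lemma le_T (x : V4) : x ≤ T := le_top

lemma F_le (x : V4) : F ≤ x := bot_le

lemma min_eq_T {a b : V4} : min a b = T ↔ a = T ∧ b = T := min_eq_top

lemma max_eq_T {a b : V4} : max a b = T ↔ a = T ∨ b = T := max_eq_top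

end V4

section Eval

variable {I : Interp α}

lemma evalConj_eq_T {L : List (Lit α)} : evalConj I L = V4.T ↔ ∀ a ∈ L, I a = V4.T := by
  induction L with
  | nil => simp [evalConj]
  | cons x xs ih =>
    simp only [evalConj, List.map_cons, List.foldr_cons] at ih ⊢
    simp [V4.min_eq_T, ih]

lemma evalDisj_eq_T {L : List (Lit α)} : evalDisj I L = V4.T ↔ ∃ a ∈ L, I a = V4.T := by
  induction L with
  | nil => simp [evalDisj]
  | cons x xs ih =>
    simp only [evalDisj, List.map_cons, List.foldr_cons] at ih ⊢
    simp [V4.max_eq_T, ih]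

lemma evalConj_le {a : Lit α} {L : List (Lit α)} (h : a ∈ L) : evalConj I L ≤ I a := by
  induction L with
  | nil => simp at h
  | cons x xs ih =>
    simp only [evalConj, List.map_cons, List.foldr_cons]
    rcases List.mem_cons.1 h with rfl | h
    · exact min_le_left _ _
    · exact (min_le_right _ _).trans (ih h)

end Eval

section TwoValued

variable {I J : Interp α}

lemma twoValued.solid (hI : twoValued I) : solid I := fun l h => by
  rcases hI l with h' | h' <;> rw [h'] at h <;> cases h

lemma collapse_mono (h : interpLE I J) : collapse I ⊆ collapse J :=
  fun l hl => top_le_iff.1 ((show I l = ⊤ from hl).symm.trans_le (h l))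

lemma eq_of_interpLE_of_collapse_eq (hJ : twoValued J) (hle : interpLE I J)
    (hc : collapse I = collapse J) : I = J := by
  funext l
  rcases hJ l with h | h
  · exact (le_bot_iff.1 ((hle l).trans_eq h)).trans h.symm
  · have hl : l ∈ collapse I := hc ▸ h
    exact hl.trans h.symm

open Classical in
noncomputable def Interp.ofSet (N : Set (Lit α)) : Interp α :=
  fun l => if l ∈ N then V4.T else V4.F

lemma twoValued_ofSet (N : Set (Lit α)) : twoValued (Interp.ofSet N) := fun l => by
  unfold Interp.ofSet; split_ifs <;> simp

lemma collapse_ofSet (N : Set (Lit α)) : collapse (Interp.ofSet N) = N := by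
  ext l
  simp only [collapse, Interp.ofSet, Set.mem_ofPred_eq]
  split_ifs <;> simp_all

lemma ofSet_collapse_le (I : Interp α) : interpLE (Interp.ofSet (collapse I)) I := fun l => by
  unfold Interp.ofSet; split_ifs with h
  · exact h.ge
  · exact V4.F_le _

lemma ofSet_mono {N N' : Set (Lit α)} (h : N ⊆ N') :
    interpLE (Interp.ofSet N) (Interp.ofSet N') := fun l => by
  unfold Interp.ofSet
  split_ifs with hN hN' <;> first | exact le_rfl | exact V4.F_le _ | exact absurd (h hN) hN'

lemma ofSet_collapse (hI : twoValued I) : Interp.ofSet (collapse I) = I :=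
  eq_of_interpLE_of_collapse_eq hI (ofSet_collapse_le I) (collapse_ofSet _)

end TwoValued

section Reduct

variable {I M : Interp α} {P : Set (DRule α)}

lemma dredSat_unstarred_iff {h p : List (Lit α)} :
    dredSat I ⟨h, p, false⟩ ↔ evalConj I p ≤ evalDisj I h := by
  simp [dredSat, DRedRule.bodyVal, min_eq_right (V4.le_T _)]

lemma exists_mem_collapse_of_dredSat {h p : List (Lit α)} (hr : dredSat I ⟨h, p, false⟩)
    (hp : ∀ a ∈ p, a ∈ collapse I) : ∃ c ∈ h, c ∈ collapse I := by
  rw [dredSat_unstarred_iff, evalConj_eq_T.2 hp] at hr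
  exact evalDisj_eq_T.1 (top_le_iff.1 hr)

lemma dredSat_of_twoValued {h p : List (Lit α)} (hI : twoValued I)
    (hr : (∀ a ∈ p, a ∈ collapse I) → ∃ c ∈ h, c ∈ collapse I) : dredSat I ⟨h, p, false⟩ := by
  rw [dredSat_unstarred_iff]
  by_cases hp : ∀ a ∈ p, a ∈ collapse I
  · rw [evalDisj_eq_T.2 (hr hp)]
    exact V4.le_T _
  · push Not at hp
    obtain ⟨a, ha, haT⟩ := hp
    calc evalConj I p ≤ I a := evalConj_le ha
      _ = V4.F := (hI a).resolve_right haT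
      _ ≤ _ := V4.F_le _

lemma dxreduct_eq_image_glDReduct (hDELP : ∀ R ∈ P, R.cs = []) :
    dxreduct M P = (fun q : DPosRule α => (⟨q.head, q.pos, false⟩ : DRedRule α)) ''
      glDReduct P (collapse M) := by
  ext r
  constructor
  · rintro ⟨R, hR, hr⟩
    unfold dxredRule at hr
    split_ifs at hr with hneg
    · simp at hr
    · rw [DRule.headList, hDELP R hR, dxredHead, List.mem_singleton] at hr
      push Not at hneg
      exact ⟨⟨R.c1, R.pos⟩, ⟨R, hR, hneg, rfl, rfl⟩, hr.symm⟩
  · rintro ⟨⟨head, pos⟩, ⟨R, hR, hneg, rfl, rfl⟩, rfl⟩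
    refine ⟨R, hR, ?_⟩
    rw [dxredRule, if_neg (by simpa [collapse] using hneg), DRule.headList, hDELP R hR]
    simp [dxredHead]

lemma dposModel_collapse_of_dredModel (hDELP : ∀ R ∈ P, R.cs = [])
    (h : dredModel I (dxreduct M P)) : dposModel (collapse I) (glDReduct P (collapse M)) :=
  fun q hq => exists_mem_collapse_of_dredSat
    (h _ (dxreduct_eq_image_glDReduct hDELP ▸ ⟨q, hq, rfl⟩))

lemma dredModel_of_dposModel_collapse (hDELP : ∀ R ∈ P, R.cs = []) (hI : twoValued I)
    (h : dposModel (collapse I) (glDReduct P (collapse M))) : dredModel I (dxreduct M P) := by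
  rw [dxreduct_eq_image_glDReduct hDELP]
  rintro _ ⟨q, hq, rfl⟩
  exact dredSat_of_twoValued hI (h q hq)

end Reduct

section AnswerSet

variable {M : Interp α} {P : Set (DRule α)}

theorem dAnswerSet.twoValued (hDELP : ∀ R ∈ P, R.cs = []) (hM : dAnswerSet P M) :
    twoValued M := by
  obtain ⟨-, -, hmod, hmin⟩ := hM
  have hmod' : dredModel (Interp.ofSet (collapse M)) (dxreduct M P) :=
    dredModel_of_dposModel_collapse hDELP (twoValued_ofSet _)
      (by rw [collapse_ofSet]; exact dposModel_collapse_of_dredModel hDELP hmod)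
  have hM : Interp.ofSet (collapse M) = M :=
    hmin _ (twoValued_ofSet _).solid hmod' (ofSet_collapse_le M)
  exact hM ▸ twoValued_ofSet _

theorem dAnswerSet.stdDAnswerSet_collapse (hDELP : ∀ R ∈ P, R.cs = [])
    (hM : dAnswerSet P M) : stdDAnswerSet P (collapse M) := by
  have hM₂ := hM.twoValued hDELP
  obtain ⟨-, hcons, hmod, hmin⟩ := hM
  refine ⟨hcons, dposModel_collapse_of_dredModel hDELP hmod, fun N hN hsub => ?_⟩
  have hmodN : dredModel (Interp.ofSet N) (dxreduct M P) :=
    dredModel_of_dposModel_collapse hDELP (twoValued_ofSet N) ((collapse_ofSet N).symm ▸ hN)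
  have hNM := hmin _ (twoValued_ofSet N).solid hmodN (ofSet_collapse hM₂ ▸ ofSet_mono hsub)
  simpa only [collapse_ofSet] using congrArg collapse hNM

theorem dAnswerSet_of_stdDAnswerSet (hDELP : ∀ R ∈ P, R.cs = []) (hM : twoValued M)
    (hstd : stdDAnswerSet P (collapse M)) : dAnswerSet P M := by
  obtain ⟨hcons, hmod, hmin⟩ := hstd
  refine ⟨hM.solid, hcons, dredModel_of_dposModel_collapse hDELP hM hmod, fun N _ hN hle => ?_⟩
  exact eq_of_interpLE_of_collapse_eq hM hle
    (hmin _ (dposModel_collapse_of_dredModel hDELP hN) (collapse_mono hle))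

end AnswerSet

theorem dlpod_answerSet_iff_stdDAnswerSet_general {α : Type} (P : Set (DRule α))
    (hDELP : ∀ R ∈ P, R.cs = []) :
    ∀ M : Interp α,
      dAnswerSet P M ↔ (twoValued M ∧ stdDAnswerSet P (collapse M)) :=
  fun _ => ⟨fun hM => ⟨hM.twoValued hDELP, hM.stdDAnswerSet_collapse hDELP⟩,
    fun ⟨hM, hstd⟩ => dAnswerSet_of_stdDAnswerSet hDELP hM hstd⟩

/-- For a consistent disjunctive extended logic program `P`
(every rule head a single disjunction, every minimal-model-of-its-own-GL-reduct
set of literals consistent), the three-valued DLPOD answer sets of `P` are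
exactly the two-valued interpretations whose set of true literals is a standard
disjunctive answer set of `P`. -/
theorem dlpod_answerSet_iff_stdDAnswerSet {α : Type} (P : Set (DRule α))
    (hDELP : ∀ R ∈ P, R.cs = [])
    (hCons : ∀ N : Set (Lit α),
      (dposModel N (glDReduct P N) ∧
        ∀ N', dposModel N' (glDReduct P N) → N' ⊆ N → N' = N) →
      twoConsistent N) :
    ∀ M : Interp α,
      dAnswerSet P M ↔ (twoValued M ∧ stdDAnswerSet P (collapse M)) :=
  dlpod_answerSet_iff_stdDAnswerSet_general P hDELP
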